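/- arXiv:1707.01212 — 2 statements merged into one kernel-verified Lean document; each statement's English description precedes it below -/
import Mathlib

section
/- ProtoDash guarantee (Theorem 4.5): let m ≥ 1 with m ≤ n, and let L₀ = ∅ and, for 0 ≤ i < m, L_{i+1} = L_i ∪ {j_i} where j_i ∉ L_i satisfies (μ − Kζ^{L_i})_{j_i} ≥ (μ − Kζ^{L_i})_j for all j ∉ L_i. Let L* ⊆ {1,…,n} be any set with |L*| ≤ m, and suppose γ > 0 is such that for every L ⊆ L_m and every S disjoint from L with |S| ≤ m, Σ_{j ∈ S}(f(L∪{j}) − f(L)) ≥ γ · (f(L∪S) − f(L)). Then f(L_m) ≥ (1 − e^{−(3c/(4C̃₁))·γ}) · f(L*), where C̃₁ = max_{1≤j≤n} K_{jj}. -/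
open Finset Matrix

noncomputable section

/-- The objective `l(w) = ⟨μ, w⟩ - (1/2) ⟨w, K w⟩`. -/
def obj {n : ℕ} (K : Matrix (Fin n) (Fin n) ℝ) (μ : Fin n → ℝ) (w : Fin n → ℝ) : ℝ :=
  μ ⬝ᵥ w - (1 / 2) * (w ⬝ᵥ (K *ᵥ w))

/-- The feasible set `Ω_L = {w : w ≥ 0, w_j = 0 for j ∉ L}`. -/
def feas {n : ℕ} (L : Finset (Fin n)) : Set (Fin n → ℝ) :=
  {w | (∀ j, 0 ≤ w j) ∧ ∀ j ∉ L, w j = 0}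

lemma dot_mulVec_symm {n : ℕ} {K : Matrix (Fin n) (Fin n) ℝ} (hK : K.IsSymm)
    (w v : Fin n → ℝ) : w ⬝ᵥ (K *ᵥ v) = v ⬝ᵥ (K *ᵥ w) := by
  simp only [dotProduct, mulVec, Finset.mul_sum]
  rw [Finset.sum_comm]
  refine Finset.sum_congr rfl fun i _ => Finset.sum_congr rfl fun j _ => ?_
  rw [show K j i = K i j from hK.apply i j]
  ring

lemma obj_add {n : ℕ} {K : Matrix (Fin n) (Fin n) ℝ} {μ : Fin n → ℝ} (hK : K.IsSymm)
    (w v : Fin n → ℝ) :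
    obj K μ (w + v) = obj K μ w + (fun j => μ j - (K *ᵥ w) j) ⬝ᵥ v
      - (1 / 2) * (v ⬝ᵥ (K *ᵥ v)) := by
  have hsymm1 : v ⬝ᵥ (K *ᵥ w) = w ⬝ᵥ (K *ᵥ v) := dot_mulVec_symm hK v w
  have hgv : (fun j => μ j - (K *ᵥ w) j) ⬝ᵥ v = μ ⬝ᵥ v - (K *ᵥ w) ⬝ᵥ v := by
    simp [dotProduct, sub_mul, Finset.sum_sub_distrib]
  have hcomm : (K *ᵥ w) ⬝ᵥ v = v ⬝ᵥ (K *ᵥ w) := dotProduct_comm _ _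
  simp only [obj, mulVec_add, dotProduct_add, add_dotProduct, hgv, hcomm, hsymm1]
  ring

set_option maxHeartbeats 1000000 in
/-- Theorem 4.5 (ProtoDash guarantee). -/
theorem protodash_guarantee (n : ℕ) (hn : 1 ≤ n)
    (K : Matrix (Fin n) (Fin n) ℝ) (hsymm : K.IsSymm) (hpd : K.PosDef)
    (μ : Fin n → ℝ)
    (ζ : Finset (Fin n) → Fin n → ℝ)
    (hζ : ∀ L : Finset (Fin n),
      ζ L ∈ feas L ∧ ∀ w ∈ feas L, obj K μ w ≤ obj K μ (ζ L))
    (f : Finset (Fin n) → ℝ) (hf : ∀ L : Finset (Fin n), f L = obj K μ (ζ L))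
    (c : ℝ) (hc : 0 < c)
    (hcK : ∀ x : Fin n → ℝ, c * (∑ j, (x j) ^ 2) ≤ x ⬝ᵥ (K *ᵥ x))
    (C₁ : ℝ) (hC₁ub : ∀ j, K j j ≤ C₁) (hC₁mem : ∃ j, C₁ = K j j)
    (m : ℕ) (hm : 1 ≤ m) (hmn : m ≤ n)
    (Lseq : ℕ → Finset (Fin n)) (jseq : ℕ → Fin n)
    (hL0 : Lseq 0 = ∅)
    (hstep : ∀ i < m, jseq i ∉ Lseq i ∧ Lseq (i + 1) = insert (jseq i) (Lseq i) ∧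
      ∀ j ∉ Lseq i, μ j - (K *ᵥ ζ (Lseq i)) j ≤ μ (jseq i) - (K *ᵥ ζ (Lseq i)) (jseq i))
    (Lopt : Finset (Fin n)) (hLopt : Lopt.card ≤ m)
    (γ : ℝ) (hγ : 0 < γ)
    (hsub : ∀ L' ⊆ Lseq m, ∀ S : Finset (Fin n), Disjoint L' S → S.card ≤ m →
      ∑ j ∈ S, (f (insert j L') - f L') ≥ γ * (f (L' ∪ S) - f L')) :
    f (Lseq m) ≥ (1 - Real.exp (-(3 * c / (4 * C₁)) * γ)) * f Lopt := by
  have hzfeas : ∀ L : Finset (Fin n), ζ L ∈ feas L := fun L => (hζ L).1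
  have hzopt : ∀ L : Finset (Fin n), ∀ w ∈ feas L, obj K μ w ≤ obj K μ (ζ L) :=
    fun L => (hζ L).2
  -- C₁ is positive
  have hC₁pos : 0 < C₁ := by
    obtain ⟨j0, hj0⟩ := hC₁mem
    have h1 := hcK (Pi.single j0 1)
    have h2 : ∑ j, ((Pi.single j0 1 : Fin n → ℝ) j) ^ 2 = 1 := by
      rw [Finset.sum_eq_single j0]
      · simp
      · intro b _ hb; simp [Pi.single_apply, hb]
      · simp
    have h3 : (Pi.single j0 1 : Fin n → ℝ) ⬝ᵥ (K *ᵥ Pi.single j0 1) = K j0 j0 := by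
      rw [single_dotProduct]
      simp [mulVec, dotProduct_single]
    rw [h2, h3] at h1
    rw [hj0]; linarith
  have hmpos : (0 : ℝ) < m := by exact_mod_cast hm
  -- monotonicity of f
  have hmono : ∀ L L' : Finset (Fin n), L ⊆ L' → f L ≤ f L' := by
    intro L L' h
    rw [hf, hf]
    exact hzopt L' (ζ L) ⟨(hzfeas L).1, fun j hj => (hzfeas L).2 j fun hl => hj (h hl)⟩
  -- f ∅ = 0
  have hfempty : f (∅ : Finset (Fin n)) = 0 := by
    have h0 : ζ (∅ : Finset (Fin n)) = 0 :=
      funext fun j => (hzfeas ∅).2 j (by simp)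
    rw [hf, h0]
    simp [obj]
  -- Lemma A : lower bound on greedy gain
  have lemA : ∀ (L : Finset (Fin n)) (j : Fin n), 0 ≤ μ j - (K *ᵥ ζ L) j →
      (μ j - (K *ᵥ ζ L) j) ^ 2 / (2 * C₁) ≤ f (insert j L) - f L := by
    intro L j hg
    set g : ℝ := μ j - (K *ᵥ ζ L) j with hgdef
    set t : ℝ := g / C₁ with ht
    have htnn : 0 ≤ t := div_nonneg hg hC₁pos.le
    have hwfeas : ζ L + Pi.single j t ∈ feas (insert j L) := by
      constructor
      · intro k
        have h1 := (hzfeas L).1 k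
        by_cases hkj : k = j
        · subst hkj
          have : (ζ L + (Pi.single k t : Fin n → ℝ)) k = ζ L k + t := by simp
          rw [this]; linarith
        · have : (ζ L + (Pi.single j t : Fin n → ℝ)) k = ζ L k := by
            simp [Pi.single_apply, hkj]
          rw [this]; exact h1
      · intro k hk
        have hk1 : k ≠ j := by intro h; exact hk (by simp [h])
        have hk2 : k ∉ L := fun h => hk (Finset.mem_insert_of_mem h)
        simp [Pi.single_apply, hk1, (hzfeas L).2 k hk2]
    have hobj : obj K μ (ζ L + Pi.single j t)
        = obj K μ (ζ L) + t * g - (1 / 2) * (t ^ 2 * K j j) := by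
      rw [obj_add hsymm]
      have h1 : (fun k => μ k - (K *ᵥ ζ L) k) ⬝ᵥ Pi.single j t = g * t := by
        rw [dotProduct_single]
      have h2 : (Pi.single j t : Fin n → ℝ) ⬝ᵥ (K *ᵥ Pi.single j t) = t * (K j j * t) := by
        rw [single_dotProduct]
        simp [mulVec, dotProduct_single]
      rw [h1, h2]; ring
    have h1 : obj K μ (ζ L + Pi.single j t) ≤ f (insert j L) := by
      rw [hf]; exact hzopt (insert j L) _ hwfeas
    have h2 : g ^ 2 / (2 * C₁) ≤ t * g - (1 / 2) * (t ^ 2 * K j j) := by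
      have hKd : K j j ≤ C₁ := hC₁ub j
      rw [ht, div_le_iff₀ (by positivity : (0:ℝ) < 2 * C₁)]
      have e : (g / C₁ * g - 1 / 2 * ((g / C₁) ^ 2 * K j j)) * (2 * C₁)
          = 2 * g ^ 2 - g ^ 2 / C₁ * K j j := by
        field_simp
      rw [e]
      have h3 : g ^ 2 / C₁ * K j j ≤ g ^ 2 / C₁ * C₁ :=
        mul_le_mul_of_nonneg_left hKd (by positivity)
      have h4 : g ^ 2 / C₁ * C₁ = g ^ 2 := div_mul_cancel₀ _ hC₁pos.ne'
      linarith
    rw [hf L]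
    linarith
  -- variational inequality at ζ L
  have hVI : ∀ (L : Finset (Fin n)), ∀ w ∈ feas L,
      (fun k => μ k - (K *ᵥ ζ L) k) ⬝ᵥ (w - ζ L) ≤ 0 := by
    intro L w hw
    set v : Fin n → ℝ := w - ζ L with hv
    set a : ℝ := (fun k => μ k - (K *ᵥ ζ L) k) ⬝ᵥ v with ha
    set Q : ℝ := v ⬝ᵥ (K *ᵥ v) with hQ
    have hQnn : 0 ≤ Q := le_trans (by positivity) (hcK v)
    have key : ∀ t : ℝ, 0 < t → t ≤ 1 → t * a - (1 / 2) * (t ^ 2 * Q) ≤ 0 := by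
      intro t ht0 ht1
      have hfeas : ζ L + t • v ∈ feas L := by
        constructor
        · intro k
          have h1 := (hzfeas L).1 k
          have h2 := hw.1 k
          have : (ζ L + t • v) k = ζ L k + t * (w k - ζ L k) := by simp [hv]
          rw [this]; nlinarith
        · intro k hk
          have : (ζ L + t • v) k = ζ L k + t * (w k - ζ L k) := by simp [hv]
          rw [this, (hzfeas L).2 k hk, hw.2 k hk]; ring
      have hle := hzopt L _ hfeas
      rw [obj_add hsymm] at hle
      have e1 : (fun k => μ k - (K *ᵥ ζ L) k) ⬝ᵥ (t • v) = t * a := dotProduct_smul t _ _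
      have e2 : (t • v) ⬝ᵥ (K *ᵥ (t • v)) = t ^ 2 * Q := by
        rw [mulVec_smul, dotProduct_smul, smul_dotProduct]
        simp [hQ]; ring
      rw [e1, e2] at hle
      linarith
    by_contra hcon
    push_neg at hcon
    rcases eq_or_lt_of_le hQnn with hQ0 | hQpos
    · have h := key 1 one_pos le_rfl
      rw [← hQ0] at h
      simp at h
      linarith
    · set t : ℝ := min 1 (a / Q) with htdef
      have ht0 : 0 < t := lt_min one_pos (div_pos hcon hQpos)
      have ht1 : t ≤ 1 := min_le_left _ _
      have htq : t * Q ≤ a := by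
        have h := min_le_right 1 (a / Q)
        calc t * Q ≤ (a / Q) * Q := mul_le_mul_of_nonneg_right h hQnn
          _ = a := div_mul_cancel₀ a hQpos.ne'
      have h := key t ht0 ht1
      nlinarith [mul_pos ht0 hcon]
  -- Lemma B : upper bound on gains
  have lemB : ∀ (L : Finset (Fin n)) (j : Fin n), j ∉ L → ∀ b : ℝ, 0 ≤ b →
      μ j - (K *ᵥ ζ L) j ≤ b → f (insert j L) - f L ≤ b ^ 2 / (2 * c) := by
    intro L j hjL b hb hgb
    set z' : Fin n → ℝ := ζ (insert j L) with hz'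
    set d : Fin n → ℝ := z' - ζ L with hd
    have hzsum : ζ L + d = z' := by rw [hd]; abel
    have hobj : f (insert j L)
        = f L + (fun k => μ k - (K *ᵥ ζ L) k) ⬝ᵥ d - (1 / 2) * (d ⬝ᵥ (K *ᵥ d)) := by
      rw [hf, hf, ← hz', ← hzsum, obj_add hsymm]
    set w' : Fin n → ℝ := Function.update z' j 0 with hw'
    have hw'feas : w' ∈ feas L := by
      constructor
      · intro k
        by_cases hkj : k = j
        · subst hkj; simp [hw']
        · rw [hw', Function.update_of_ne hkj]; exact (hzfeas _).1 k
      · intro k hk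
        by_cases hkj : k = j
        · subst hkj; simp [hw']
        · rw [hw', Function.update_of_ne hkj]
          exact (hzfeas _).2 k (by simp [Finset.mem_insert, hkj, hk])
    have hVIw := hVI L w' hw'feas
    have hdecomp : d = (w' - ζ L) + Pi.single j (z' j) := by
      funext k
      by_cases hkj : k = j
      · subst hkj
        simp [hd, hw', (hzfeas L).2 k hjL]
      · simp [hd, hw', Function.update_of_ne hkj, Pi.single_apply, hkj]
    have hgd : (fun k => μ k - (K *ᵥ ζ L) k) ⬝ᵥ d ≤ (μ j - (K *ᵥ ζ L) j) * z' j := by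
      rw [hdecomp, dotProduct_add, dotProduct_single]
      linarith
    have hdj : d j = z' j := by simp [hd, (hzfeas L).2 j hjL]
    have hdKd : c * (z' j) ^ 2 ≤ d ⬝ᵥ (K *ᵥ d) := by
      refine le_trans ?_ (hcK d)
      have h1 : (d j) ^ 2 ≤ ∑ k, (d k) ^ 2 :=
        Finset.single_le_sum (f := fun k => (d k) ^ 2) (fun k _ => sq_nonneg _)
          (Finset.mem_univ j)
      rw [← hdj]
      exact mul_le_mul_of_nonneg_left h1 hc.le
    have hz'j : 0 ≤ z' j := (hzfeas _).1 j
    have hfinal : (μ j - (K *ᵥ ζ L) j) * z' j - (c / 2) * (z' j) ^ 2 ≤ b ^ 2 / (2 * c) := by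
      rw [le_div_iff₀ (by positivity : (0:ℝ) < 2 * c)]
      nlinarith [sq_nonneg (b - c * z' j), mul_le_mul_of_nonneg_right hgb hz'j, hc]
    rw [hobj]
    linarith
  -- chain of subsets
  have hsubsucc : ∀ i < m, Lseq i ⊆ Lseq (i + 1) := by
    intro i hi
    rw [(hstep i hi).2.1]
    exact Finset.subset_insert _ _
  have hchainaux : ∀ k, k ≤ m → ∀ i ≤ k, Lseq i ⊆ Lseq k := by
    intro k
    induction k with
    | zero =>
      intro _ i hi
      have : i = 0 := Nat.le_zero.mp hi
      rw [this]
    | succ k ih =>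
      intro hk i hi
      rcases Nat.lt_or_ge i (k + 1) with h | h
      · exact (ih (by omega) i (by omega)).trans (hsubsucc k (by omega))
      · have : i = k + 1 := by omega
        rw [this]
  set r : ℝ := c * γ / (m * C₁) with hr
  have hrpos : 0 < r := by positivity
  -- one-step decrease
  have hstepineq : ∀ i < m,
      f Lopt - f (Lseq (i + 1)) ≤ Real.exp (-r) * (f Lopt - f (Lseq i)) := by
    intro i hi
    obtain ⟨hjnot, hLi1, hgreedy⟩ := hstep i hi
    set L : Finset (Fin n) := Lseq i with hLdef
    set gs : ℝ := μ (jseq i) - (K *ᵥ ζ L) (jseq i) with hgs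
    set b : ℝ := max gs 0 with hb
    have hbnn : 0 ≤ b := le_max_right _ _
    have hLsub : L ⊆ Lseq m := hchainaux m le_rfl i hi.le
    set S : Finset (Fin n) := Lopt \ L with hS
    have hdisj : Disjoint L S := Finset.disjoint_sdiff
    have hcard : S.card ≤ m := le_trans (Finset.card_le_card Finset.sdiff_subset) hLopt
    have h1 := hsub L hLsub S hdisj hcard
    have hterm : ∀ j ∈ S, f (insert j L) - f L ≤ b ^ 2 / (2 * c) := by
      intro j hj
      have hjL : j ∉ L := (Finset.mem_sdiff.mp hj).2
      exact lemB L j hjL b hbnn (le_trans (hgreedy j hjL) (le_max_left _ _))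
    have hsumle : ∑ j ∈ S, (f (insert j L) - f L) ≤ (m : ℝ) * (b ^ 2 / (2 * c)) := by
      calc ∑ j ∈ S, (f (insert j L) - f L) ≤ S.card • (b ^ 2 / (2 * c)) :=
            Finset.sum_le_card_nsmul S _ _ hterm
        _ = (S.card : ℝ) * (b ^ 2 / (2 * c)) := nsmul_eq_mul _ _
        _ ≤ (m : ℝ) * (b ^ 2 / (2 * c)) := by
            apply mul_le_mul_of_nonneg_right _ (by positivity)
            exact_mod_cast hcard
    have hLopt_mono : f Lopt ≤ f (L ∪ S) := by
      apply hmono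
      intro x hx
      rw [Finset.mem_union, Finset.mem_sdiff]
      by_cases h : x ∈ L
      · exact Or.inl h
      · exact Or.inr ⟨hx, h⟩
    have hkey : γ * (f Lopt - f L) ≤ (m : ℝ) * (b ^ 2 / (2 * c)) := by
      have h2 : γ * (f Lopt - f L) ≤ γ * (f (L ∪ S) - f L) :=
        mul_le_mul_of_nonneg_left (by linarith) hγ.le
      linarith [h1]
    have hmonostep : f L ≤ f (Lseq (i + 1)) := by
      apply hmono
      rw [hLi1]
      exact Finset.subset_insert _ _
    have hgain : b ^ 2 / (2 * C₁) ≤ f (Lseq (i + 1)) - f L := by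
      rcases le_or_gt 0 gs with h | h
      · have hbe : b = gs := max_eq_left h
        rw [hLi1, hbe]
        exact lemA L (jseq i) h
      · have hbe : b = 0 := max_eq_right h.le
        rw [hbe]
        simpa using hmonostep
    have hbineq : r * (f Lopt - f L) ≤ b ^ 2 / (2 * C₁) := by
      have h2 : γ * (f Lopt - f L) * (2 * c) ≤ (m : ℝ) * b ^ 2 := by
        rw [mul_div_assoc' (m : ℝ) (b ^ 2) (2 * c)] at hkey
        exact (le_div_iff₀ (by positivity : (0:ℝ) < 2 * c)).mp hkey
      rw [hr, div_mul_eq_mul_div, div_le_div_iff₀ (by positivity) (by positivity)]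
      nlinarith [mul_le_mul_of_nonneg_right h2 hC₁pos.le]
    have hd1 : f Lopt - f (Lseq (i + 1)) ≤ (1 - r) * (f Lopt - f L) := by
      nlinarith [hgain, hbineq]
    have hexp1 : 1 - r ≤ Real.exp (-r) := by linarith [Real.add_one_le_exp (-r)]
    have hexp2 : Real.exp (-r) ≤ 1 := Real.exp_le_one_iff.mpr (by linarith)
    rcases le_or_gt 0 (f Lopt - f L) with h | h
    · calc f Lopt - f (Lseq (i + 1)) ≤ (1 - r) * (f Lopt - f L) := hd1
        _ ≤ Real.exp (-r) * (f Lopt - f L) := mul_le_mul_of_nonneg_right hexp1 h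
    · have hd2 : f Lopt - f (Lseq (i + 1)) ≤ f Lopt - f L := by linarith [hmonostep]
      nlinarith [hd2, hexp2, h]
  -- induction
  have hind : ∀ i, i ≤ m → f Lopt - f (Lseq i) ≤ Real.exp (-(r * i)) * f Lopt := by
    intro i
    induction i with
    | zero =>
      intro _
      rw [hL0, hfempty]
      simp
    | succ k ih =>
      intro hk
      have hk' : k < m := hk
      have h1 := hstepineq k hk'
      have h2 := ih hk'.le
      calc f Lopt - f (Lseq (k + 1)) ≤ Real.exp (-r) * (f Lopt - f (Lseq k)) := h1
        _ ≤ Real.exp (-r) * (Real.exp (-(r * k)) * f Lopt) :=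
            mul_le_mul_of_nonneg_left h2 (Real.exp_pos _).le
        _ = Real.exp (-(r * ((k + 1 : ℕ) : ℝ))) * f Lopt := by
            rw [← mul_assoc, ← Real.exp_add]
            congr 2
            push_cast
            ring
  have hfinal := hind m le_rfl
  have hrm : r * (m : ℝ) = c * γ / C₁ := by
    rw [hr]
    field_simp
  rw [hrm] at hfinal
  have hfoptnn : 0 ≤ f Lopt := by
    have := hmono ∅ Lopt (Finset.empty_subset _)
    linarith [hfempty]
  have hexpcmp : Real.exp (-(c * γ / C₁)) ≤ Real.exp (-(3 * c / (4 * C₁)) * γ) := by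
    apply Real.exp_le_exp.mpr
    rw [neg_le, neg_mul, neg_neg, div_mul_eq_mul_div,
      div_le_div_iff₀ (by positivity) (by positivity)]
    nlinarith [mul_pos (mul_pos hc hγ) hC₁pos]
  rw [ge_iff_le]
  nlinarith [mul_le_mul_of_nonneg_left hexpcmp hfoptnn, hfinal]
end
end

section
/- Let L ⊆ {1,…,n} and j ∉ L. If ζ^{L∪{j}}_j > 0, then Σ_{i ∈ L} K_{j i} · ζ^{L∪{j}}_i ≤ Σ_{i ∈ L} K_{j i} · ζ^L_i ≤ μ_j. -/
/-!
The gradient of `l` at `ζ` is `g(ζ) = μ - Kζ`. A maximizer of `l` over the convex cone `Ω_L`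
satisfies `⟨g(ζ), ζ⟩ = 0` and `⟨g(ζ), w⟩ ≤ 0` on `Ω_L`. Put `a = ζ^{L∪{j}}`, `b = ζ^L`,
`d = a - b`, `s = a_j`. Since `Kd = g(b) - g(a)`, these conditions give
`⟨d, Kd⟩ = ⟨g(b), a⟩ + ⟨g(a), b⟩ ≤ s g(b)_j`, because `a - s e_j ∈ Ω_L` and `b ∈ Ω_{L∪{j}}`.
Now `⟨d, Kd⟩ ≥ 0` gives `g(b)_j ≥ 0`, the second bound, and, using `g(a)_j ≤ 0`,
`0 ≤ ⟨d - s e_j, K(d - s e_j)⟩ ≤ s² K_jj - s (Kd)_j` gives `(Kd)_j ≤ s K_jj`, the first bound.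
-/

open Finset Matrix

noncomputable section

open Filter Topology

namespace Matrix.IsSymm

variable {ι : Type*} [Fintype ι] {K : Matrix ι ι ℝ}

lemma dotProduct_mulVec_comm (hK : K.IsSymm) (x y : ι → ℝ) :
    x ⬝ᵥ (K *ᵥ y) = y ⬝ᵥ (K *ᵥ x) := by
  rw [dotProduct_mulVec, ← vecMul_transpose, hK.eq, dotProduct_comm]

lemma dotProduct_mulVec_add_smul (hK : K.IsSymm) (x v : ι → ℝ) (t : ℝ) :
    (x + t • v) ⬝ᵥ (K *ᵥ (x + t • v)) =
      x ⬝ᵥ (K *ᵥ x) + 2 * t * (v ⬝ᵥ (K *ᵥ x)) + t ^ 2 * (v ⬝ᵥ (K *ᵥ v)) := by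
  simp only [mulVec_add, mulVec_smul, dotProduct_add, add_dotProduct, dotProduct_smul,
    smul_dotProduct, smul_eq_mul, hK.dotProduct_mulVec_comm x v]
  ring

lemma mulVec_apply_le_of_dotProduct_mulVec_le [DecidableEq ι] (hK : K.IsSymm)
    (hpsd : K.PosSemidef) {d : ι → ℝ} {s c : ℝ} (j : ι) (hs : 0 < s)
    (hd : d ⬝ᵥ (K *ᵥ d) ≤ s * c) (hc : c ≤ (K *ᵥ d) j) : (K *ᵥ d) j ≤ s * K j j := by
  have hshift := hpsd.dotProduct_mulVec_nonneg (d + (-s) • Pi.single j 1)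
  rw [star_trivial, hK.dotProduct_mulVec_add_smul, single_dotProduct, mulVec_single_one,
    single_dotProduct, col_apply, one_mul, one_mul] at hshift
  refine le_of_mul_le_mul_left ?_ hs
  nlinarith [mul_le_mul_of_nonneg_left hc hs.le]

end Matrix.IsSymm

section Optimality

variable {n : ℕ} {K : Matrix (Fin n) (Fin n) ℝ} {μ : Fin n → ℝ}

lemma obj_add_smul (hK : K.IsSymm) (x v : Fin n → ℝ) (t : ℝ) :
    obj K μ (x + t • v) =
      obj K μ x + t * ((μ - K *ᵥ x) ⬝ᵥ v) - t ^ 2 / 2 * (v ⬝ᵥ (K *ᵥ v)) := by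
  simp only [obj, hK.dotProduct_mulVec_add_smul, dotProduct_add, dotProduct_smul, smul_eq_mul,
    sub_dotProduct, dotProduct_comm v]
  ring

lemma IsMaxOn.obj_grad_dotProduct_sub_nonpos (hK : K.IsSymm) {S : Set (Fin n → ℝ)}
    (hS : Convex ℝ S) {ζ w : Fin n → ℝ} (hζ : ζ ∈ S) (hmax : IsMaxOn (obj K μ) S ζ)
    (hw : w ∈ S) : (μ - K *ᵥ ζ) ⬝ᵥ (w - ζ) ≤ 0 := by
  set C := (w - ζ) ⬝ᵥ (K *ᵥ (w - ζ))
  have hsmall : ∀ t ∈ Set.Ioc (0 : ℝ) 1, (μ - K *ᵥ ζ) ⬝ᵥ (w - ζ) ≤ t / 2 * C := by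
    rintro t ⟨ht0, ht1⟩
    have hle := isMaxOn_iff.mp hmax _ (hS.add_smul_sub_mem hζ hw ⟨ht0.le, ht1⟩)
    rw [obj_add_smul hK] at hle
    refine le_of_mul_le_mul_left ?_ ht0
    linarith
  have hlim : Tendsto (fun t : ℝ => t / 2 * C) (𝓝[>] 0) (𝓝 0) := by
    simpa using (((continuous_id.div_const 2).mul_const C).tendsto 0).mono_left
      nhdsWithin_le_nhds
  exact ge_of_tendsto hlim (eventually_of_mem (Ioc_mem_nhdsGT one_pos) hsmall)

lemma IsMaxOn.obj_grad_kkt (hK : K.IsSymm) {S : Set (Fin n → ℝ)} (hS : Convex ℝ S)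
    (h0 : 0 ∈ S) (hadd : ∀ x ∈ S, ∀ y ∈ S, x + y ∈ S) {ζ : Fin n → ℝ} (hζ : ζ ∈ S)
    (hmax : IsMaxOn (obj K μ) S ζ) :
    (μ - K *ᵥ ζ) ⬝ᵥ ζ = 0 ∧ ∀ w ∈ S, (μ - K *ᵥ ζ) ⬝ᵥ w ≤ 0 := by
  have hvi := fun w (hw : w ∈ S) => IsMaxOn.obj_grad_dotProduct_sub_nonpos hK hS hζ hmax hw
  have hle : ∀ w ∈ S, (μ - K *ᵥ ζ) ⬝ᵥ w ≤ 0 := fun w hw => by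
    simpa using hvi (w + ζ) (hadd w hw ζ hζ)
  refine ⟨le_antisymm (hle ζ hζ) ?_, hle⟩
  simpa using hvi 0 h0

end Optimality

section Feasible

variable {n : ℕ} {L : Finset (Fin n)}

lemma convex_feas (L : Finset (Fin n)) : Convex ℝ (feas L) := by
  rintro x ⟨hx0, hxL⟩ y ⟨hy0, hyL⟩ s t hs ht -
  refine ⟨fun i => ?_, fun i hi => ?_⟩
  · simpa using add_nonneg (mul_nonneg hs (hx0 i)) (mul_nonneg ht (hy0 i))
  · simp [hxL i hi, hyL i hi]

lemma zero_mem_feas (L : Finset (Fin n)) : (0 : Fin n → ℝ) ∈ feas L :=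
  ⟨fun _ => le_rfl, fun _ _ => rfl⟩

lemma add_mem_feas {x y : Fin n → ℝ} (hx : x ∈ feas L) (hy : y ∈ feas L) : x + y ∈ feas L :=
  ⟨fun i => add_nonneg (hx.1 i) (hy.1 i), fun i hi => by simp [hx.2 i hi, hy.2 i hi]⟩

lemma feas_mono {L' : Finset (Fin n)} (h : L ⊆ L') : feas L ⊆ feas L' :=
  fun _ hw => ⟨hw.1, fun i hi => hw.2 i fun hiL => hi (h hiL)⟩

lemma single_mem_feas {j : Fin n} (hj : j ∈ L) : (Pi.single j 1 : Fin n → ℝ) ∈ feas L := by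
  refine ⟨fun i => ?_, fun i hi => Pi.single_eq_of_ne (ne_of_mem_of_not_mem hj hi).symm 1⟩
  by_cases h : i = j
  · subst h; simp
  · simp [Pi.single_eq_of_ne h]

lemma sub_smul_single_mem_feas {j : Fin n} {w : Fin n → ℝ} (hw : w ∈ feas (insert j L)) :
    w - w j • Pi.single j 1 ∈ feas L := by
  refine ⟨fun i => ?_, fun i hi => ?_⟩ <;> by_cases h : i = j
  · subst h; simp
  · simpa [Pi.single_eq_of_ne h] using hw.1 i
  · subst h; simp
  · simpa [Pi.single_eq_of_ne h] using hw.2 i (by simp [h, hi])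

lemma mulVec_apply_of_mem_feas (K : Matrix (Fin n) (Fin n) ℝ) {w : Fin n → ℝ}
    (hw : w ∈ feas L) (i : Fin n) : (K *ᵥ w) i = ∑ k ∈ L, K i k * w k := by
  rw [mulVec, dotProduct, ← sum_subset (subset_univ L)]
  intro k _ hk
  rw [hw.2 k hk, mul_zero]

lemma IsMaxOn.obj_grad_kkt_feas {K : Matrix (Fin n) (Fin n) ℝ} {μ ζ : Fin n → ℝ}
    (hmax : IsMaxOn (obj K μ) (feas L) ζ) (hK : K.IsSymm) (hζ : ζ ∈ feas L) :
    (μ - K *ᵥ ζ) ⬝ᵥ ζ = 0 ∧ ∀ w ∈ feas L, (μ - K *ᵥ ζ) ⬝ᵥ w ≤ 0 :=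
  hmax.obj_grad_kkt hK (convex_feas L) (zero_mem_feas L) (fun _ hx _ hy => add_mem_feas hx hy) hζ

lemma dotProduct_mulVec_sub_le_of_kkt {K : Matrix (Fin n) (Fin n) ℝ} {μ a b : Fin n → ℝ}
    {j : Fin n} (ha : a ∈ feas (insert j L)) (hb : b ∈ feas L)
    (ha_comp : (μ - K *ᵥ a) ⬝ᵥ a = 0) (ha_le : ∀ w ∈ feas (insert j L), (μ - K *ᵥ a) ⬝ᵥ w ≤ 0)
    (hb_comp : (μ - K *ᵥ b) ⬝ᵥ b = 0) (hb_le : ∀ w ∈ feas L, (μ - K *ᵥ b) ⬝ᵥ w ≤ 0) :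
    (a - b) ⬝ᵥ (K *ᵥ (a - b)) ≤ a j * (μ - K *ᵥ b) j := by
  have hgba := hb_le _ (sub_smul_single_mem_feas ha)
  rw [dotProduct_sub, dotProduct_smul, dotProduct_single, smul_eq_mul, mul_one] at hgba
  have hgab := ha_le b (feas_mono (subset_insert j L) hb)
  have hKd : K *ᵥ (a - b) = (μ - K *ᵥ b) - (μ - K *ᵥ a) := by rw [mulVec_sub]; abel
  rw [hKd, dotProduct_comm, sub_dotProduct, dotProduct_sub, dotProduct_sub, ha_comp, hb_comp]
  linarith

end Feasible

theorem cross_term_bounds_general (n : ℕ)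
    (K : Matrix (Fin n) (Fin n) ℝ) (hsymm : K.IsSymm) (hpd : K.PosDef)
    (μ : Fin n → ℝ)
    (ζ : Finset (Fin n) → Fin n → ℝ)
    (hζ : ∀ L : Finset (Fin n),
      ζ L ∈ feas L ∧ ∀ w ∈ feas L, obj K μ w ≤ obj K μ (ζ L))
    (L : Finset (Fin n)) (j : Fin n) (hj : j ∉ L)
    (hpos : 0 < ζ (insert j L) j) :
    (∑ i ∈ L, K j i * ζ (insert j L) i ≤ ∑ i ∈ L, K j i * ζ L i) ∧
    (∑ i ∈ L, K j i * ζ L i ≤ μ j) := by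
  set a := ζ (insert j L)
  set b := ζ L
  obtain ⟨ha_comp, ha_le⟩ := (isMaxOn_iff.2 (hζ (insert j L)).2).obj_grad_kkt_feas hsymm (hζ _).1
  obtain ⟨hb_comp, hb_le⟩ := (isMaxOn_iff.2 (hζ L).2).obj_grad_kkt_feas hsymm (hζ L).1
  have hQ := dotProduct_mulVec_sub_le_of_kkt (hζ _).1 (hζ L).1 ha_comp ha_le hb_comp hb_le
  have hgaj : (μ - K *ᵥ a) j ≤ 0 := by
    simpa using ha_le _ (single_mem_feas (mem_insert_self j L))
  have hgbj : (μ - K *ᵥ b) j ≤ (K *ᵥ (a - b)) j := by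
    simp only [mulVec_sub, Pi.sub_apply] at hgaj ⊢
    linarith
  have hKdj := hsymm.mulVec_apply_le_of_dotProduct_mulVec_le hpd.posSemidef j hpos hQ hgbj
  have hgb_nonneg : 0 ≤ (μ - K *ᵥ b) j := by
    refine nonneg_of_mul_nonneg_right (le_trans ?_ hQ) hpos
    simpa using hpd.posSemidef.dotProduct_mulVec_nonneg (a - b)
  have hKa := mulVec_apply_of_mem_feas K (hζ (insert j L)).1 j
  have hKb := mulVec_apply_of_mem_feas K (hζ L).1 j
  rw [sum_insert hj] at hKa
  rw [mulVec_sub, Pi.sub_apply, hKa, hKb] at hKdj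
  rw [Pi.sub_apply, hKb] at hgb_nonneg
  constructor <;> linarith

/-- If the new weight is strictly positive, then
`∑_{i ∈ L} K_{ji} ζ^{L∪{j}}_i ≤ ∑_{i ∈ L} K_{ji} ζ^L_i ≤ μ_j`. -/
theorem cross_term_bounds (n : ℕ) (hn : 1 ≤ n)
    (K : Matrix (Fin n) (Fin n) ℝ) (hsymm : K.IsSymm) (hpd : K.PosDef)
    (μ : Fin n → ℝ)
    (ζ : Finset (Fin n) → Fin n → ℝ)
    (hζ : ∀ L : Finset (Fin n),
      ζ L ∈ feas L ∧ ∀ w ∈ feas L, obj K μ w ≤ obj K μ (ζ L))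
    (f : Finset (Fin n) → ℝ) (hf : ∀ L : Finset (Fin n), f L = obj K μ (ζ L))
    (L : Finset (Fin n)) (j : Fin n) (hj : j ∉ L)
    (hpos : 0 < ζ (insert j L) j) :
    (∑ i ∈ L, K j i * ζ (insert j L) i ≤ ∑ i ∈ L, K j i * ζ L i) ∧
    (∑ i ∈ L, K j i * ζ L i ≤ μ j) :=
  cross_term_bounds_general n K hsymm hpd μ ζ hζ L j hj hpos
end
end
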